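/- Let n ≥ 1 be an integer, let β > −1 be real, and let α_1, ..., α_n be real numbers with α_l > −1 for all l. Then ∫_{1 > λ_1 > λ_2 > ... > λ_n > 0} (∏_{k=1}^n (1 − λ_k)^β) · (∏_{1≤j<k≤n} (λ_j − λ_k)) · det[λ_j^{α_k}]_{j,k=1,...,n} dλ_1⋯dλ_n = (∏_{1≤j<k≤n} (α_j − α_k)) · ∏_{l=1}^n Γ(α_l + 1) Γ(β + n − l + 1)/Γ(α_l + β + n + 1). -/

import Mathlib

/-!
The integrand is invariant under permutations of the `λ_j`, since the Vandermonde product and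
`det[λ_j ^ α_k]` are both alternating, so the integral over the ordered region is `1 / n!` times
the integral over the cube `(0,1)ⁿ`. Up to a sign, `∏_{j<k} (λ_j - λ_k)` is the projective
Vandermonde determinant `det[λ_i ^ j (1 - λ_i) ^ (n-1-j)]`, and Andreief's identity turns the cube
integral into `n!` times the determinant of the Beta integrals
`B(α_k + j + 1, β + n - j) = Γ(α_k + 1 + j) Γ(β + n - j) / Γ(α_k + β + n + 1)`.
The weight `(1 - λ) ^ (n-1-j)` makes the denominators independent of `j`, so after pulling out row
and column factors only `det[Γ(α_k + 1 + j)] = ∏ Γ(α_k + 1) · det[(α_k + 1)⁽ʲ⁾]` remains, a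
Vandermonde determinant in the `α_k` because the rising factorial `(x)⁽ʲ⁾` is monic of degree `j`.
-/

open MeasureTheory Set Matrix

theorem Complex.ofReal_rpow_mul_one_sub_rpow {a b t : ℝ} (ht : t ∈ Icc 0 1) :
    ((t ^ a * (1 - t) ^ b : ℝ) : ℂ) = (t : ℂ) ^ (a : ℂ) * (1 - (t : ℂ)) ^ (b : ℂ) := by
  rw [ofReal_mul, ofReal_cpow ht.1, ofReal_cpow (sub_nonneg.2 ht.2), ofReal_sub, ofReal_one]

theorem integrableOn_rpow_mul_one_sub_rpow {a b : ℝ} (ha : -1 < a) (hb : -1 < b) :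
    IntegrableOn (fun t : ℝ => t ^ a * (1 - t) ^ b) (Ioo 0 1) := by
  have h := Complex.betaIntegral_convergent (u := a + 1) (v := b + 1)
    (by simp; linarith) (by simp; linarith)
  simp only [add_sub_cancel_right] at h
  rw [intervalIntegrable_iff_integrableOn_Ioo_of_le zero_le_one] at h
  have hc : IntegrableOn (fun t : ℝ => ((t ^ a * (1 - t) ^ b : ℝ) : ℂ)) (Ioo 0 1) :=
    h.congr_fun (fun t ht => (Complex.ofReal_rpow_mul_one_sub_rpow (Ioo_subset_Icc_self ht)).symm)
      measurableSet_Ioo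
  simpa [IntegrableOn] using hc.re

theorem integral_rpow_mul_one_sub_rpow {a b : ℝ} (ha : -1 < a) (hb : -1 < b) :
    ∫ t in Ioo 0 1, t ^ a * (1 - t) ^ b =
      Real.Gamma (a + 1) * Real.Gamma (b + 1) / Real.Gamma (a + b + 2) := by
  have h := Complex.betaIntegral_eq_Gamma_mul_div (a + 1) (b + 1)
    (by simp; linarith) (by simp; linarith)
  simp only [Complex.betaIntegral, add_sub_cancel_right] at h
  rw [← intervalIntegral.integral_congr fun t ht =>
      Complex.ofReal_rpow_mul_one_sub_rpow (by rwa [uIcc_of_le zero_le_one] at ht),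
    intervalIntegral.integral_ofReal, intervalIntegral.integral_of_le zero_le_one,
    integral_Ioc_eq_integral_Ioo] at h
  apply Complex.ofReal_injective
  rw [h]
  push_cast [← Complex.Gamma_ofReal]
  ring_nf

theorem rpow_mul_one_sub_rpow_mul_pow {t : ℝ} (ht : t ∈ Ioo 0 1) (m p : ℕ) (a b : ℝ) :
    t ^ m * (1 - t) ^ p * (t ^ a * (1 - t) ^ b) = t ^ (a + m) * (1 - t) ^ (b + p) := by
  rw [Real.rpow_add_natCast ht.1.ne', Real.rpow_add_natCast (sub_pos.2 ht.2).ne']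
  ring

theorem integrableOn_pow_mul_rpow_mul_one_sub_rpow {a b : ℝ} (ha : -1 < a) (hb : -1 < b)
    (m p : ℕ) :
    IntegrableOn (fun t : ℝ => t ^ m * (1 - t) ^ p * (t ^ a * (1 - t) ^ b)) (Ioo 0 1) :=
  (integrableOn_rpow_mul_one_sub_rpow (by linarith [m.cast_nonneg (α := ℝ)])
    (by linarith [p.cast_nonneg (α := ℝ)])).congr_fun
    (fun t ht => (rpow_mul_one_sub_rpow_mul_pow ht m p a b).symm) measurableSet_Ioo

theorem integral_pow_mul_rpow_mul_one_sub_rpow {a b : ℝ} (ha : -1 < a) (hb : -1 < b)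
    (m p : ℕ) :
    ∫ t in Ioo 0 1, t ^ m * (1 - t) ^ p * (t ^ a * (1 - t) ^ b) =
      Real.Gamma (a + m + 1) * Real.Gamma (b + p + 1) / Real.Gamma (a + b + m + p + 2) := by
  rw [setIntegral_congr_fun measurableSet_Ioo fun t ht => rpow_mul_one_sub_rpow_mul_pow ht m p a b,
    integral_rpow_mul_one_sub_rpow (by linarith [m.cast_nonneg (α := ℝ)])
      (by linarith [p.cast_nonneg (α := ℝ)])]
  ring_nf

theorem Real.Gamma_add_nat_eq_mul_ascPochhammer {x : ℝ} (hx : ∀ k : ℕ, x ≠ -k) (m : ℕ) :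
    Gamma (x + m) = Gamma x * (ascPochhammer ℝ m).eval x := by
  induction m with
  | zero => simp
  | succ m ih =>
    have hxm : x + m ≠ 0 := fun h => hx m (eq_neg_of_add_eq_zero_left h)
    rw [Nat.cast_succ, ← add_assoc, Gamma_add_one hxm, ih, ascPochhammer_succ_eval]
    ring

theorem det_Gamma_add_nat {n : ℕ} {v : Fin n → ℝ} (hv : ∀ k (i : ℕ), v k ≠ -i) :
    (of fun j k : Fin n => Real.Gamma (v k + j)).det =
      (∏ k, Real.Gamma (v k)) * (vandermonde v).det := by
  rw [← det_transpose, det_eval_matrixOfPolynomials_eq_det_vandermonde v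
    (fun j => ascPochhammer ℝ j) (fun j => ascPochhammer_natDegree ℝ j)
    (fun j => monic_ascPochhammer ℝ j), ← det_mul_column]
  congr 1
  ext k j
  exact Real.Gamma_add_nat_eq_mul_ascPochhammer (hv k) j

theorem Matrix.det_eq_sum_sign_mul_prod_apply_perm {ι R : Type*} [Fintype ι] [DecidableEq ι]
    [CommRing R] (A : Matrix ι ι R) :
    A.det = ∑ σ : Equiv.Perm ι, ((Equiv.Perm.sign σ : ℤ) : R) * ∏ i, A i (σ i) := by
  rw [← det_transpose, det_apply']
  rfl

section Andreief

variable {ι X : Type*} [Fintype ι] [DecidableEq ι]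

theorem prod_mul_det_eq_sum {R : Type*} [CommRing R] (h g : ι → X → R) (x : ι → X) :
    (∏ i, h i (x i)) * (of fun i k => g k (x i)).det =
      ∑ σ : Equiv.Perm ι, ((Equiv.Perm.sign σ : ℤ) : R) * ∏ i, h i (x i) * g (σ i) (x i) := by
  simp only [det_eq_sum_sign_mul_prod_apply_perm, of_apply, Finset.mul_sum,
    mul_left_comm _ (_ : R), Finset.prod_mul_distrib]

theorem det_mul_det_eq_sum {R : Type*} [CommRing R] (f g : ι → X → R) (x : ι → X) :
    (of fun i j => f j (x i)).det * (of fun i k => g k (x i)).det =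
      ∑ σ : Equiv.Perm ι, ((Equiv.Perm.sign σ : ℤ) : R) *
        ((∏ i, f (σ i) (x i)) * (of fun i k => g k (x i)).det) := by
  simp only [det_eq_sum_sign_mul_prod_apply_perm (of fun i j => f j (x i)), of_apply,
    Finset.sum_mul, mul_assoc]

theorem det_mul_det_comp_perm {R : Type*} [CommRing R] (f g : ι → X → R) (x : ι → X)
    (σ : Equiv.Perm ι) :
    (of fun i j => f j ((x ∘ σ) i)).det * (of fun i k => g k ((x ∘ σ) i)).det =
      (of fun i j => f j (x i)).det * (of fun i k => g k (x i)).det := by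
  rw [show (of fun i j => f j ((x ∘ σ) i)) = (of fun i j => f j (x i)).submatrix σ id from rfl,
    show (of fun i k => g k ((x ∘ σ) i)) = (of fun i k => g k (x i)).submatrix σ id from rfl,
    det_permute, det_permute, mul_mul_mul_comm, ← Int.cast_mul, Int.units_coe_mul_self,
    Int.cast_one, one_mul]

variable {𝕜 : Type*} [RCLike 𝕜] [MeasurableSpace X] {μ : Measure X} [SigmaFinite μ]

theorem integrable_prod_mul_det {h g : ι → X → 𝕜}
    (hhg : ∀ i k, Integrable (fun t => h i t * g k t) μ) :
    Integrable (fun x => (∏ i, h i (x i)) * (of fun i k => g k (x i)).det)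
      (Measure.pi fun _ => μ) := by
  simp only [prod_mul_det_eq_sum]
  exact integrable_finsetSum _ fun σ _ =>
    (Integrable.fintype_prod fun i => hhg i (σ i)).const_mul _

theorem integral_prod_mul_det {h g : ι → X → 𝕜}
    (hhg : ∀ i k, Integrable (fun t => h i t * g k t) μ) :
    ∫ x, (∏ i, h i (x i)) * (of fun i k => g k (x i)).det ∂Measure.pi (fun _ => μ) =
      (of fun i k => ∫ t, h i t * g k t ∂μ).det := by
  simp_rw [prod_mul_det_eq_sum]
  rw [integral_finsetSum _ fun σ _ => (Integrable.fintype_prod fun i => hhg i (σ i)).const_mul _,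
    det_eq_sum_sign_mul_prod_apply_perm]
  refine Finset.sum_congr rfl fun σ _ => ?_
  rw [integral_const_mul, integral_fintype_prod_eq_prod (fun i t => h i t * g (σ i) t)]
  rfl

theorem integrable_det_mul_det {f g : ι → X → 𝕜}
    (hfg : ∀ j k, Integrable (fun t => f j t * g k t) μ) :
    Integrable (fun x => (of fun i j => f j (x i)).det * (of fun i k => g k (x i)).det)
      (Measure.pi fun _ => μ) := by
  simp only [det_mul_det_eq_sum]
  exact integrable_finsetSum _ fun σ _ =>
    (integrable_prod_mul_det fun i => hfg (σ i)).const_mul _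

open Nat in
theorem integral_det_mul_det {f g : ι → X → 𝕜}
    (hfg : ∀ j k, Integrable (fun t => f j t * g k t) μ) :
    ∫ x, (of fun i j => f j (x i)).det * (of fun i k => g k (x i)).det ∂Measure.pi (fun _ => μ) =
      (Fintype.card ι)! * (of fun j k => ∫ t, f j t * g k t ∂μ).det := by
  have hperm (σ : Equiv.Perm ι) :
      ∫ x, (∏ i, f (σ i) (x i)) * (of fun i k => g k (x i)).det ∂Measure.pi (fun _ => μ) =
        ((Equiv.Perm.sign σ : ℤ) : 𝕜) * (of fun j k => ∫ t, f j t * g k t ∂μ).det := by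
    rw [integral_prod_mul_det fun i => hfg (σ i)]
    exact det_permute σ (of fun j k => ∫ t, f j t * g k t ∂μ)
  simp_rw [det_mul_det_eq_sum]
  rw [integral_finsetSum _ fun σ _ => (integrable_prod_mul_det fun i => hfg (σ i)).const_mul _]
  simp only [integral_const_mul, hperm]
  simp only [← mul_assoc, ← Int.cast_mul, Int.units_coe_mul_self, Int.cast_one, one_mul,
    Finset.sum_const, Finset.card_univ, Fintype.card_perm, nsmul_eq_mul]

end Andreief

section Symmetrization

variable {n : ℕ}

theorem MeasureTheory.measurePreserving_comp_perm {α : Type*} [MeasurableSpace α]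
    (μ : Measure α) [SigmaFinite μ] (σ : Equiv.Perm (Fin n)) :
    MeasurePreserving (fun x : Fin n → α => x ∘ σ) (Measure.pi fun _ => μ)
      (Measure.pi fun _ => μ) :=
  measurePreserving_arrowCongr' (fun _ => μ) (fun _ => μ) σ.symm (MeasurableEquiv.refl α)
    fun _ => MeasurePreserving.id μ

theorem MeasureTheory.measurableEmbedding_comp_perm {α : Type*} [MeasurableSpace α]
    (σ : Equiv.Perm (Fin n)) : MeasurableEmbedding (fun x : Fin n → α => x ∘ σ) :=
  (MeasurableEquiv.arrowCongr' σ.symm (MeasurableEquiv.refl α)).measurableEmbedding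

theorem MeasureTheory.Measure.pi_setOf_apply_eq_apply_null {α : Type*} [MeasurableSpace α]
    [MeasurableEq α] (μ : Measure α) [SigmaFinite μ] [NullSingletonClass μ] {i j : Fin n}
    (hij : i ≠ j) : Measure.pi (fun _ => μ) {x | x i = x j} = 0 := by
  obtain ⟨m, rfl⟩ : ∃ m, n = m + 1 := Nat.exists_eq_succ_of_ne_zero i.pos.ne'
  obtain ⟨j, rfl⟩ := Fin.exists_succAbove_eq hij.symm
  have hs : MeasurableSet {p : α × (Fin m → α) | p.1 = p.2 j} :=
    measurableSet_eq_fun measurable_fst ((measurable_pi_apply j).comp measurable_snd)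
  have hpre : {x : Fin (m + 1) → α | x i = x (i.succAbove j)} =
      MeasurableEquiv.piFinSuccAbove (fun _ => α) i ⁻¹' {p | p.1 = p.2 j} := rfl
  rw [hpre, (measurePreserving_piFinSuccAbove (fun _ => μ) i).measure_preimage
    hs.nullMeasurableSet, Measure.prod_apply_symm hs]
  simp

theorem MeasureTheory.Measure.ae_injective_pi {α : Type*} [MeasurableSpace α] [MeasurableEq α]
    (μ : Measure α) [SigmaFinite μ] [NullSingletonClass μ] :
    ∀ᵐ x ∂Measure.pi (fun _ : Fin n => μ), Function.Injective x := by
  have h : ∀ᵐ x ∂Measure.pi (fun _ : Fin n => μ), ∀ i j, i ≠ j → x i ≠ x j := by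
    simp only [Filter.eventually_all]
    intro i j hij
    filter_upwards [measure_eq_zero_iff_ae_notMem.1 (pi_setOf_apply_eq_apply_null μ hij)]
      with x hx using hx
  filter_upwards [h] with x hx i j hxij
  by_contra hij
  exact hx i j hij hxij

theorem eq_of_strictAnti_comp_perm {α : Type*} [Preorder α] {x : Fin n → α}
    {σ τ : Equiv.Perm (Fin n)} (hσ : StrictAnti (x ∘ σ)) (hτ : StrictAnti (x ∘ τ)) : σ = τ := by
  have hrange : range (x ∘ σ) = range (x ∘ τ) := by
    simp only [range_comp, Equiv.range_eq_univ]
  have heq := (hσ.range_inj hτ).1 hrange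
  have hx : Function.Injective x := by
    simpa using hσ.injective.comp σ.symm.injective
  exact Equiv.ext fun i => hx (congrFun heq i)

theorem exists_strictAnti_comp_perm {α : Type*} [LinearOrder α] {x : Fin n → α}
    (hx : Function.Injective x) : ∃ σ : Equiv.Perm (Fin n), StrictAnti (x ∘ σ) :=
  ⟨Tuple.sort x * Fin.revPerm, by
    rw [Equiv.Perm.coe_mul, ← Function.comp_assoc]
    exact ((Tuple.monotone_sort x).strictMono_of_injective
      (hx.comp (Tuple.sort x).injective)).comp_strictAnti fun _ _ h => Fin.rev_strictAnti h⟩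

theorem measurableSet_setOf_strictAnti : MeasurableSet {x : Fin n → ℝ | StrictAnti x} := by
  simp only [StrictAnti, ofPred_forall]
  exact .iInter fun a => .iInter fun b => .iInter fun _ =>
    measurableSet_lt (measurable_pi_apply b) (measurable_pi_apply a)

open Nat in
theorem integral_eq_factorial_smul_setIntegral_strictAnti {E : Type*} [NormedAddCommGroup E]
    [NormedSpace ℝ E] {μ : Measure ℝ} [SigmaFinite μ] [NullSingletonClass μ]
    {G : (Fin n → ℝ) → E} (hG : ∀ (σ : Equiv.Perm (Fin n)) x, G (x ∘ σ) = G x)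
    (hGi : Integrable G (Measure.pi fun _ => μ)) :
    ∫ x, G x ∂Measure.pi (fun _ => μ) =
      n ! • ∫ x in {x | StrictAnti x}, G x ∂Measure.pi (fun _ => μ) := by
  set ν := Measure.pi fun _ : Fin n => μ
  let C : Equiv.Perm (Fin n) → Set (Fin n → ℝ) := fun σ => (· ∘ σ) ⁻¹' {x | StrictAnti x}
  have hC (σ : Equiv.Perm (Fin n)) : MeasurableSet (C σ) :=
    measurableSet_setOf_strictAnti.preimage (measurePreserving_comp_perm μ σ).measurable
  have hdisj : Pairwise (Function.onFun Disjoint C) := fun σ τ hστ =>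
    disjoint_left.2 fun x hσ hτ => hστ (eq_of_strictAnti_comp_perm hσ hτ)
  have hcover : ν.restrict (⋃ σ, C σ) = ν := Measure.restrict_eq_self_of_ae_mem <| by
    filter_upwards [Measure.ae_injective_pi μ] with x hx
    exact mem_iUnion.2 (exists_strictAnti_comp_perm hx)
  have hchamber (σ : Equiv.Perm (Fin n)) :
      ∫ x in C σ, G x ∂ν = ∫ x in {x | StrictAnti x}, G x ∂ν := by
    simpa only [hG] using (measurePreserving_comp_perm μ σ).setIntegral_preimage_emb
      (measurableEmbedding_comp_perm σ) G _
  calc ∫ x, G x ∂ν = ∫ x in ⋃ σ, C σ, G x ∂ν := by rw [hcover]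
    _ = ∑ σ, ∫ x in C σ, G x ∂ν := integral_iUnion_fintype hC hdisj fun σ => hGi.integrableOn
    _ = n ! • ∫ x in {x | StrictAnti x}, G x ∂ν := by simp [hchamber, Fintype.card_perm]

end Symmetrization

section Jacobi

variable {n : ℕ}

noncomputable def jacobiIntegrand (β : ℝ) (α : Fin n → ℝ) (x : Fin n → ℝ) : ℝ :=
  (∏ k, (1 - x k) ^ β) * (∏ j, ∏ k ∈ Finset.Ioi j, (x j - x k)) *
    (of fun j k : Fin n => x j ^ α k).det

theorem prod_Ioi_sub_eq_mul_det_vandermonde {R : Type*} [CommRing R] (v : Fin n → R) :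
    ∏ i, ∏ j ∈ Finset.Ioi i, (v i - v j) =
      (∏ i : Fin n, ∏ _j ∈ Finset.Ioi i, (-1 : R)) * (vandermonde v).det := by
  rw [det_vandermonde, ← Finset.prod_mul_distrib]
  refine Finset.prod_congr rfl fun i _ => ?_
  rw [← Finset.prod_mul_distrib]
  exact Finset.prod_congr rfl fun j _ => by ring

theorem det_projVandermonde_one_sub {R : Type*} [CommRing R] (v : Fin n → R) :
    (projVandermonde v (1 - v)).det = (vandermonde v).det := by
  rw [det_projVandermonde, det_vandermonde]
  refine Finset.prod_congr rfl fun i _ => Finset.prod_congr rfl fun j _ => ?_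
  simp only [Pi.sub_apply, Pi.one_apply]
  ring

theorem jacobiIntegrand_eq (β : ℝ) (α x : Fin n → ℝ) :
    jacobiIntegrand β α x = (∏ i : Fin n, ∏ _j ∈ Finset.Ioi i, (-1 : ℝ)) *
      ((of fun i j : Fin n => x i ^ (j : ℕ) * (1 - x i) ^ (j.rev : ℕ)).det *
        (of fun i k : Fin n => x i ^ α k * (1 - x i) ^ β).det) := by
  have hP : (of fun i j : Fin n => x i ^ (j : ℕ) * (1 - x i) ^ (j.rev : ℕ)).det =
      (vandermonde x).det :=
    det_projVandermonde_one_sub x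
  have hW : (of fun i k : Fin n => x i ^ α k * (1 - x i) ^ β).det =
      (∏ i, (1 - x i) ^ β) * (of fun j k : Fin n => x j ^ α k).det := by
    rw [← det_mul_column]
    congr 1
    ext i k
    exact mul_comm _ _
  rw [jacobiIntegrand, hP, hW, prod_Ioi_sub_eq_mul_det_vandermonde]
  ring

theorem jacobiIntegrand_comp_perm (β : ℝ) (α : Fin n → ℝ) (σ : Equiv.Perm (Fin n))
    (x : Fin n → ℝ) : jacobiIntegrand β α (x ∘ σ) = jacobiIntegrand β α x := by
  rw [jacobiIntegrand_eq, jacobiIntegrand_eq]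
  exact congrArg _ (det_mul_det_comp_perm
    (fun (j : Fin n) (t : ℝ) => t ^ (j : ℕ) * (1 - t) ^ (j.rev : ℕ))
    (fun (k : Fin n) (t : ℝ) => t ^ α k * (1 - t) ^ β) x σ)

variable {β : ℝ} {α : Fin n → ℝ}

theorem integrableOn_jacobi_moment (hβ : -1 < β) (hα : ∀ l, -1 < α l) (j k : Fin n) :
    IntegrableOn (fun t : ℝ => t ^ (j : ℕ) * (1 - t) ^ (j.rev : ℕ) * (t ^ α k * (1 - t) ^ β))
      (Ioo 0 1) :=
  integrableOn_pow_mul_rpow_mul_one_sub_rpow (hα k) hβ j j.rev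

theorem integral_jacobi_moment (hβ : -1 < β) (hα : ∀ l, -1 < α l) (j k : Fin n) :
    ∫ t in Ioo 0 1, t ^ (j : ℕ) * (1 - t) ^ (j.rev : ℕ) * (t ^ α k * (1 - t) ^ β) =
      Real.Gamma (α k + 1 + j) * Real.Gamma (β + n - j) / Real.Gamma (α k + β + n + 1) := by
  have hrev : ((j.rev : ℕ) : ℝ) = n - 1 - j := by
    rw [Fin.val_rev, Nat.cast_sub (by omega)]
    push_cast
    ring
  rw [integral_pow_mul_rpow_mul_one_sub_rpow (hα k) hβ, hrev]
  ring_nf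

theorem det_jacobi_moment (hα : ∀ l, -1 < α l) (β : ℝ) :
    (of fun j k : Fin n => Real.Gamma (α k + 1 + j) * Real.Gamma (β + n - j) /
        Real.Gamma (α k + β + n + 1)).det =
      (∏ l : Fin n, Real.Gamma (α l + 1) * Real.Gamma (β + n - (l : ℝ)) /
        Real.Gamma (α l + β + n + 1)) * (vandermonde α).det := by
  have hv (k : Fin n) (i : ℕ) : α k + 1 ≠ -i := by
    linarith [hα k, (i.cast_nonneg : (0 : ℝ) ≤ i)]
  calc _ = (∏ j : Fin n, Real.Gamma (β + n - j)) *
        ((∏ k, (Real.Gamma (α k + β + n + 1))⁻¹) *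
          (of fun j k : Fin n => Real.Gamma (α k + 1 + j)).det) := by
        rw [← det_mul_row, ← det_mul_column]
        congr 1
        ext j k
        simp only [of_apply]
        ring
    _ = _ := by
        rw [det_Gamma_add_nat hv, det_vandermonde_add, ← mul_assoc, ← mul_assoc,
          ← Finset.prod_mul_distrib, ← Finset.prod_mul_distrib]
        congr 1
        exact Finset.prod_congr rfl fun l _ => by ring

theorem integrable_jacobiIntegrand (hβ : -1 < β) (hα : ∀ l, -1 < α l) :
    Integrable (jacobiIntegrand β α)
      (Measure.pi fun _ : Fin n => volume.restrict (Ioo (0 : ℝ) 1)) := by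
  rw [show jacobiIntegrand β α = _ from funext (jacobiIntegrand_eq β α)]
  exact (integrable_det_mul_det (integrableOn_jacobi_moment hβ hα)).const_mul _

open Nat in
theorem integral_jacobiIntegrand (hβ : -1 < β) (hα : ∀ l, -1 < α l) :
    ∫ x, jacobiIntegrand β α x ∂Measure.pi (fun _ : Fin n => volume.restrict (Ioo (0 : ℝ) 1)) =
      n ! * ((∏ j, ∏ k ∈ Finset.Ioi j, (α j - α k)) *
        ∏ l : Fin n, Real.Gamma (α l + 1) * Real.Gamma (β + n - (l : ℝ)) /
          Real.Gamma (α l + β + n + 1)) := by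
  simp only [jacobiIntegrand_eq, integral_const_mul]
  rw [integral_det_mul_det (integrableOn_jacobi_moment hβ hα)]
  simp only [integral_jacobi_moment hβ hα, det_jacobi_moment hα, Fintype.card_fin,
    prod_Ioi_sub_eq_mul_det_vandermonde α]
  ring

end Jacobi

theorem stmt_3_general (n : ℕ) (β : ℝ) (hβ : -1 < β) (α : Fin n → ℝ)
    (hα : ∀ l, -1 < α l) :
    ∫ lam in {lam : Fin n → ℝ |
        (∀ i j : Fin n, i < j → lam j < lam i) ∧ ∀ i, 0 < lam i ∧ lam i < 1},
      (∏ k, (1 - lam k) ^ β) * (∏ j, ∏ k ∈ Finset.Ioi j, (lam j - lam k)) *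
        (Matrix.of fun j k : Fin n => lam j ^ α k).det
    = (∏ j, ∏ k ∈ Finset.Ioi j, (α j - α k)) *
        ∏ l : Fin n,
          Real.Gamma (α l + 1) * Real.Gamma (β + n - (l : ℝ)) /
            Real.Gamma (α l + β + n + 1) := by
  have hregion : volume.restrict {lam : Fin n → ℝ |
        (∀ i j : Fin n, i < j → lam j < lam i) ∧ ∀ i, 0 < lam i ∧ lam i < 1} =
      (Measure.pi fun _ : Fin n => volume.restrict (Ioo (0 : ℝ) 1)).restrict
        {x | StrictAnti x} := by
    rw [← Measure.restrict_pi_pi, ← volume_pi,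
      Measure.restrict_restrict measurableSet_setOf_strictAnti]
    congr 1
    ext x
    simp [StrictAnti]
  change ∫ x, jacobiIntegrand β α x ∂_ = _
  rw [hregion]
  refine mul_left_cancel₀ (Nat.cast_ne_zero.2 n.factorial_ne_zero : (n.factorial : ℝ) ≠ 0) ?_
  rw [← integral_jacobiIntegrand hβ hα, ← nsmul_eq_mul,
    integral_eq_factorial_smul_setIntegral_strictAnti (jacobiIntegrand_comp_perm β α)
      (integrable_jacobiIntegrand hβ hα)]

/-- normalization identity of the Jacobi upper-triangular ensemble. -/
theorem stmt_3 (n : ℕ) (hn : 1 ≤ n) (β : ℝ) (hβ : -1 < β) (α : Fin n → ℝ)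
    (hα : ∀ l, -1 < α l) :
    ∫ lam in {lam : Fin n → ℝ |
        (∀ i j : Fin n, i < j → lam j < lam i) ∧ ∀ i, 0 < lam i ∧ lam i < 1},
      (∏ k, (1 - lam k) ^ β) * (∏ j, ∏ k ∈ Finset.Ioi j, (lam j - lam k)) *
        (Matrix.of fun j k : Fin n => lam j ^ α k).det
    = (∏ j, ∏ k ∈ Finset.Ioi j, (α j - α k)) *
        ∏ l : Fin n,
          Real.Gamma (α l + 1) * Real.Gamma (β + n - (l : ℝ)) /
            Real.Gamma (α l + β + n + 1) :=
  stmt_3_general n β hβ α hα
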